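/- For every integer m and nonnegative integer k: ∑_{j=0}^{k} C(k,j)·T_{m−3k+4j} = 2^k·T_m, where T is the Tribonacci sequence extended to all integers. -/
import Mathlib


/-- Tribonacci numbers on the naturals. -/
def tribN : ℕ → ℤ
  | 0 => 0
  | 1 => 1
  | 2 => 1
  | n + 3 => tribN (n + 2) + tribN (n + 1) + tribN n

/-- Tribonacci at negative indices: `tribNeg n = T (-n)`, via `T (-n) = 2·T (3-n) - T (4-n)`. -/
def tribNeg : ℕ → ℤ
  | 0 => tribN 0
  | 1 => 2 * tribN 2 - tribN 3
  | 2 => 2 * tribN 1 - tribN 2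
  | 3 => 2 * tribN 0 - tribN 1
  | 4 => 2 * tribNeg 1 - tribN 0
  | n + 5 => 2 * tribNeg (n + 2) - tribNeg (n + 1)

/-- Tribonacci sequence extended to all integers. -/
def T (m : ℤ) : ℤ := if 0 ≤ m then tribN m.toNat else tribNeg (-m).toNat

lemma T_ofNat (n : ℕ) : T n = tribN n := by simp [T]

lemma T_neg (p : ℕ) : T (-(p:ℤ)) = tribNeg p := by
  rcases p with _ | p
  · simp [T, tribNeg]
  · have h : ¬ (0:ℤ) ≤ -((p+1:ℕ):ℤ) := by push_cast; omega
    rw [T, if_neg h, show (- -((p+1:ℕ):ℤ)).toNat = p+1 from by omega]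

lemma tribNeg_rec (p : ℕ) : tribNeg (p+4) = 2 * tribNeg (p+1) - tribNeg p := by
  rcases p with _ | p
  · simp [tribNeg]
  · rfl

lemma K (x : ℤ) : T x + T (x + 4) = 2 * T (x + 3) := by
  obtain ⟨n, rfl | rfl⟩ := Int.eq_nat_or_neg x
  · have h0 : T (n:ℤ) = tribN n := T_ofNat n
    have h3 : T ((n:ℤ)+3) = tribN (n+3) := by rw [show ((n:ℤ)+3) = ((n+3:ℕ):ℤ) by push_cast; ring, T_ofNat]
    have h4 : T ((n:ℤ)+4) = tribN (n+4) := by rw [show ((n:ℤ)+4) = ((n+4:ℕ):ℤ) by push_cast; ring, T_ofNat]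
    rw [h0, h3, h4]
    show tribN n + tribN (n+4) = 2 * tribN (n+3)
    rw [show n+4 = (n+1)+3 by ring, tribN, tribN]
    ring
  · match n with
    | 0 => decide
    | 1 => decide
    | 2 => decide
    | 3 => decide
    | (p+4) =>
      have e1 : -((p+4:ℕ):ℤ) + 4 = -(p:ℤ) := by push_cast; ring
      have e2 : -((p+4:ℕ):ℤ) + 3 = -((p+1:ℕ):ℤ) := by push_cast; ring
      rw [e1, e2, T_neg, T_neg, T_neg, tribNeg_rec]
      ring

theorem stmt17 : ∀ (m : ℤ) (k : ℕ),
    ∑ j ∈ Finset.range (k + 1), (k.choose j : ℤ) * T (m - 3 * k + 4 * j) =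
      2 ^ k * T m := by
  intro m k
  induction k generalizing m with
  | zero => simp
  | succ k ih =>
    have hA := ih (m + 1)
    have hB := ih (m - 3)
    have hC : ∑ j ∈ Finset.range (k + 1 + 1), (k.choose j : ℤ) * T (m - 3 - 3 * k + 4 * j) =
        2 ^ k * T (m - 3) := by
      rw [Finset.sum_range_succ, hB]
      simp
    rw [Finset.sum_range_succ'] at hC
    rw [Finset.sum_range_succ']
    have hsplit : ∀ j ∈ Finset.range (k + 1),
        (((k+1).choose (j+1) : ℕ) : ℤ) * T (m - 3 * ((k+1 : ℕ) : ℤ) + 4 * ((j+1 : ℕ) : ℤ)) =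
        (k.choose j : ℤ) * T (m + 1 - 3 * (k : ℤ) + 4 * (j : ℤ))
          + (k.choose (j+1) : ℤ) * T (m - 3 - 3 * (k : ℤ) + 4 * ((j+1 : ℕ) : ℤ)) := by
      intro j _
      have h1 : m - 3 * ((k+1 : ℕ) : ℤ) + 4 * ((j+1 : ℕ) : ℤ) = m + 1 - 3 * (k : ℤ) + 4 * (j : ℤ) := by
        push_cast; ring
      have h2 : m + 1 - 3 * (k : ℤ) + 4 * (j : ℤ) = m - 3 - 3 * (k : ℤ) + 4 * ((j+1 : ℕ) : ℤ) := by
        push_cast; ring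
      rw [h1, Nat.choose_succ_succ, Nat.cast_add, add_mul]
      nth_rewrite 2 [h2]
      simp only [Nat.succ_eq_add_one]
    rw [Finset.sum_congr rfl hsplit, Finset.sum_add_distrib]
    have h0 : m - 3 * ((k+1 : ℕ) : ℤ) + 4 * ((0 : ℕ) : ℤ) = m - 3 - 3 * (k : ℤ) + 4 * ((0 : ℕ) : ℤ) := by
      push_cast; ring
    rw [h0]
    have hK := K (m - 3)
    rw [show m - 3 + 4 = m + 1 by ring, show m - 3 + 3 = m by ring] at hK
    have hc : (((k+1).choose 0 : ℕ) : ℤ) = ((k.choose 0 : ℕ) : ℤ) := by simp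
    rw [hc]
    linear_combination hA + hC + 2 ^ k * hK
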